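/- On ℝ^p let f be the ℓ∞ norm, f(x) = max_i |x_i|, and let g be the ℓq norm for a real q ≥ 1, g(x) = (Σ_i |x_i|^q)^{1/q}. Let (a, b) be a linear classifier with a ≠ 0, let ρ > 0, let x_F ∈ ℝ^p satisfy ⟪a, x_F⟫ < b, and let x_RCF be an optimal robust counterfactual of x_F under f with robustness norm g and radius ρ, with x_RCF ≠ x_F. Set v := (1 / f(x_RCF − x_F)) • (x_RCF − x_F). Then for every d ∈ ℝ with d ≥ ρ, the point x̄ := x_RCF − d • v satisfies ⟪a, x̄⟫ ≤ b, i.e., x̄ has the same classification as x_F. -/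
import Mathlib


open Finset

noncomputable section

/-- The standard inner product on `Fin p → ℝ`. -/
def dot {p : ℕ} (a x : Fin p → ℝ) : ℝ := ∑ k, a k * x k

/-- `f` is a norm on `ℝ^p`. -/
def IsNorm {p : ℕ} (f : (Fin p → ℝ) → ℝ) : Prop :=
  (∀ x, f x = 0 ↔ x = 0) ∧ (∀ (c : ℝ) (x : Fin p → ℝ), f (c • x) = |c| * f x) ∧
    (∀ x y, f (x + y) ≤ f x + f y)

/-- The dual norm `f*(w) = sup { ⟪w, v⟫ : f v ≤ 1 }`. -/
def dualNorm {p : ℕ} (f : (Fin p → ℝ) → ℝ) (w : Fin p → ℝ) : ℝ :=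
  sSup {t : ℝ | ∃ v : Fin p → ℝ, f v ≤ 1 ∧ t = dot w v}

/-- `xCF` is an optimal counterfactual of the factual `xF` (classified 'No') under norm `f`. -/
def IsOptCF {p : ℕ} (a : Fin p → ℝ) (b : ℝ) (f : (Fin p → ℝ) → ℝ)
    (xF xCF : Fin p → ℝ) : Prop :=
  b ≤ dot a xCF ∧ ∀ z : Fin p → ℝ, b ≤ dot a z → f (xCF - xF) ≤ f (z - xF)

/-- `xRCF` is an optimal robust counterfactual of the factual `xF` (classified 'No')
under norm `f`, with robustness norm `g` and radius `ρ`. -/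
def IsOptRCF {p : ℕ} (a : Fin p → ℝ) (b : ℝ) (f g : (Fin p → ℝ) → ℝ) (ρ : ℝ)
    (xF xRCF : Fin p → ℝ) : Prop :=
  (∀ s : Fin p → ℝ, g s ≤ ρ → b ≤ dot a (xRCF + s)) ∧
    ∀ z : Fin p → ℝ, (∀ s : Fin p → ℝ, g s ≤ ρ → b ≤ dot a (z + s)) →
      f (xRCF - xF) ≤ f (z - xF)

/-- `w` is a subgradient of `f` at `x₀`. -/
def IsSubgradient {p : ℕ} (f : (Fin p → ℝ) → ℝ) (x₀ w : Fin p → ℝ) : Prop :=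
  ∀ y : Fin p → ℝ, f x₀ + dot w (y - x₀) ≤ f y

/-- Corollary 4(ii): for the `ℓ∞` norm as counterfactual distance and `ℓq` robustness
norm, moving back from the robust counterfactual along the counterfactual direction by
any `d ≥ ρ` gives a point with the same classification as the factual. -/
theorem rcf_backtrack_linf_lq {p : ℕ} (hp : 1 ≤ p) (q : ℝ) (hq : 1 ≤ q)
    (a : Fin p → ℝ) (ha : a ≠ 0) (b : ℝ) (ρ : ℝ) (hρ : 0 < ρ)
    (xF xRCF : Fin p → ℝ) (hxF : dot a xF < b)
    (hopt : IsOptRCF a b (fun x => ⨆ i, |x i|)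
      (fun x => (∑ i, |x i| ^ q) ^ (1 / q)) ρ xF xRCF)
    (hne : xRCF ≠ xF) :
    ∀ d : ℝ, ρ ≤ d →
      dot a (xRCF - d • ((1 / ⨆ i, |(xRCF - xF) i|) • (xRCF - xF))) ≤ b := by
  intro d hd
  have hnemp : Nonempty (Fin p) := ⟨⟨0, hp⟩⟩
  have hq0 : (0:ℝ) < q := lt_of_lt_of_le one_pos hq
  -- dot linearity lemmas
  have dot_sub : ∀ x y : Fin p → ℝ, dot a (x - y) = dot a x - dot a y := by
    intro x y; simp [dot, mul_sub, Finset.sum_sub_distrib]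
  have dot_add : ∀ x y : Fin p → ℝ, dot a (x + y) = dot a x + dot a y := by
    intro x y; simp [dot, mul_add, Finset.sum_add_distrib]
  have dot_smul : ∀ (c : ℝ) (x : Fin p → ℝ), dot a (c • x) = c * dot a x := by
    intro c x; simp [dot, Finset.mul_sum, mul_left_comm]
  set u : Fin p → ℝ := xRCF - xF with hu
  set D : ℝ := ⨆ i, |u i| with hDdef
  set A : ℝ := ∑ i, |a i| with hAdef
  set P : ℝ := dot a u with hPdef
  -- A > 0
  obtain ⟨i0, hi0⟩ := Function.ne_iff.mp ha
  have hApos : 0 < A :=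
    Finset.sum_pos' (fun j _ => abs_nonneg _) ⟨i0, Finset.mem_univ i0, abs_pos.mpr hi0⟩
  -- sup bounds
  have hle : ∀ (x : Fin p → ℝ) (i : Fin p), |x i| ≤ ⨆ j, |x j| := by
    intro x i
    have hb : BddAbove (Set.range fun j => |x j|) :=
      Set.Finite.bddAbove (Set.finite_range _)
    exact le_ciSup hb i
  -- D > 0
  have hune : u ≠ 0 := sub_ne_zero.mpr hne
  obtain ⟨j0, hj0⟩ := Function.ne_iff.mp hune
  have hDpos : 0 < D := lt_of_lt_of_le (abs_pos.mpr hj0) (hle u j0)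
  -- Hölder: P ≤ A * D
  have hP : P ≤ A * D := by
    calc P = ∑ k, a k * u k := rfl
      _ ≤ ∑ k, |a k| * |u k| := by
          refine Finset.sum_le_sum fun k _ => ?_
          rw [← abs_mul]; exact le_abs_self _
      _ ≤ ∑ k, |a k| * D := by
          refine Finset.sum_le_sum fun k _ => ?_
          exact mul_le_mul_of_nonneg_left (hle u k) (abs_nonneg _)
      _ = A * D := by rw [← Finset.sum_mul]
  -- g s ≤ ρ implies each |s i| ≤ ρ
  have hcoord : ∀ s : Fin p → ℝ, (∑ i, |s i| ^ q) ^ (1 / q) ≤ ρ → ∀ i, |s i| ≤ ρ := by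
    intro s hs i
    have h1 : |s i| = (|s i| ^ q) ^ (1 / q) := by
      rw [one_div, Real.rpow_rpow_inv (abs_nonneg _) hq0.ne']
    have h2 : |s i| ^ q ≤ ∑ j, |s j| ^ q :=
      Finset.single_le_sum (fun j _ => Real.rpow_nonneg (abs_nonneg _) q) (Finset.mem_univ i)
    calc |s i| = (|s i| ^ q) ^ (1 / q) := h1
      _ ≤ (∑ j, |s j| ^ q) ^ (1 / q) :=
          Real.rpow_le_rpow (Real.rpow_nonneg (abs_nonneg _) q) h2 (by positivity)
      _ ≤ ρ := hs
  -- hence |dot a s| ≤ A * ρ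
  have hds : ∀ s : Fin p → ℝ, (∑ i, |s i| ^ q) ^ (1 / q) ≤ ρ → -(A * ρ) ≤ dot a s := by
    intro s hs
    have : |dot a s| ≤ A * ρ := by
      calc |dot a s| ≤ ∑ k, |a k * s k| := Finset.abs_sum_le_sum_abs _ _
        _ ≤ ∑ k, |a k| * ρ := by
            refine Finset.sum_le_sum fun k _ => ?_
            rw [abs_mul]
            exact mul_le_mul_of_nonneg_left (hcoord s hs k) (abs_nonneg _)
        _ = A * ρ := by rw [← Finset.sum_mul]
    linarith [neg_abs_le (dot a s)]
  -- feasibility at s = 0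
  have hg0 : ((∑ i, |(0:Fin p → ℝ) i| ^ q) ^ (1 / q) : ℝ) ≤ ρ := by
    have h0 : (∑ i, |(0:Fin p → ℝ) i| ^ q) = 0 := by simp [Real.zero_rpow hq0.ne']
    rw [h0, Real.zero_rpow (one_div_ne_zero hq0.ne')]
    exact hρ.le
  have hfeas0 : b ≤ dot a xRCF := by
    have := hopt.1 0 hg0
    simpa using this
  -- the candidate z₀
  set c : ℝ := b + ρ * A - dot a xF with hcdef
  have hcpos : 0 < c := by nlinarith [mul_pos hρ hApos]
  set w : Fin p → ℝ := fun i => if a i < 0 then (-1:ℝ) else 1 with hwdef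
  have haw : ∀ i, a i * w i = |a i| := by
    intro i
    by_cases h : a i < 0
    · simp [hwdef, h, abs_of_neg h]
    · simp [hwdef, h, abs_of_nonneg (not_lt.mp h)]
  have hwabs : ∀ i, |w i| = 1 := by
    intro i; by_cases h : a i < 0 <;> simp [hwdef, h]
  set z₀ : Fin p → ℝ := xF + (c / A) • w with hz₀
  have hdotz₀ : dot a z₀ = b + ρ * A := by
    rw [hz₀, dot_add, dot_smul]
    have : dot a w = A := by
      simp only [dot, haw, hAdef]
    rw [this]
    field_simp
    rw [hcdef]; ring
  have hfeasz₀ : ∀ s : Fin p → ℝ, (∑ i, |s i| ^ q) ^ (1 / q) ≤ ρ → b ≤ dot a (z₀ + s) := by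
    intro s hs
    rw [dot_add, hdotz₀]
    linarith [hds s hs]
  have hoptz : D ≤ ⨆ i, |(z₀ - xF) i| := hopt.2 z₀ hfeasz₀
  have hsupz : (⨆ i, |(z₀ - xF) i|) = c / A := by
    have hval : ∀ i, |(z₀ - xF) i| = c / A := by
      intro i
      simp only [hz₀, Pi.add_apply, Pi.sub_apply, Pi.smul_apply, smul_eq_mul]
      rw [add_sub_cancel_left, abs_mul, hwabs i, mul_one,
        abs_of_pos (div_pos hcpos hApos)]
    simp only [hval]
    exact ciSup_const
  have hstar : A * D ≤ c := by
    rw [hsupz] at hoptz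
    rw [mul_comm]
    exact (le_div_iff₀ hApos).mp hoptz
  -- final computation
  have hgoal_eq : dot a (xRCF - d • ((1 / D) • u)) = dot a xRCF - d * ((1 / D) * P) := by
    rw [dot_sub, dot_smul, dot_smul]
  rw [hgoal_eq]
  have hXP : dot a xRCF = dot a xF + P := by
    have : P = dot a xRCF - dot a xF := by rw [hPdef, hu, dot_sub]
    linarith
  have hPpos : 0 < P := by
    rw [hXP] at hfeas0; linarith
  have hrw : dot a xRCF - d * ((1 / D) * P) = (D * dot a xRCF - d * P) / D := by
    field_simp
  rw [hrw, div_le_iff₀ hDpos]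
  rcases le_or_gt D d with hcase | hcase
  · nlinarith [mul_le_mul_of_nonneg_right hcase hPpos.le, mul_lt_mul_of_pos_left hxF hDpos]
  · nlinarith [mul_le_mul_of_nonneg_left hP (sub_nonneg.mpr hcase.le),
      mul_le_mul_of_nonneg_left hstar hDpos.le,
      mul_nonneg (mul_nonneg hApos.le hDpos.le) (sub_nonneg.mpr hd)]
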